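/- Assume γ > 1 and a > 0, and set β = √(u² + 4a²). Then the 3×3 real matrix A_p^TV satisfies A_p^TV·R₁ = ((u − β)/2)·R₁, A_p^TV·R₂ = 0, and A_p^TV·R₃ = ((u + β)/2)·R₃, where R₁ = (0, 1, u + (u − β)/(2(γ−1)))ᵀ, R₂ = (1, u, u²/2)ᵀ, R₃ = (0, 1, u + (u + β)/(2(γ−1)))ᵀ; the three eigenvalues (u − β)/2, 0, (u + β)/2 are pairwise distinct, so R₁, R₂, R₃ are linearly independent and the pressure subsystem is strictly hyperbolic. -/

import Mathlib

/-- The Toro–Vázquez pressure flux Jacobian of the 1-D Euler system. -/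
noncomputable def ApTV (u a γ : ℝ) : Matrix (Fin 3) (Fin 3) ℝ :=
  !![0, 0, 0;
     (γ-1)*u^2/2, -(γ-1)*u, γ-1;
     -u*a^2/(γ-1) + γ*u^3/2, a^2/(γ-1) - γ*u^2, γ*u]

/-- For `γ > 1`, `a > 0`, with `β = √(u² + 4a²)`, the matrix `A_p^TV` has eigenvectors
`R₁, R₂, R₃` with pairwise distinct eigenvalues `(u−β)/2, 0, (u+β)/2`; hence
`R₁, R₂, R₃` are linearly independent and the pressure subsystem is strictly
hyperbolic. -/
theorem eigenvectors_ApTV (u a γ : ℝ) (hγ : 1 < γ) (ha : 0 < a) :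
    let β : ℝ := Real.sqrt (u^2 + 4*a^2)
    let R₁ : Fin 3 → ℝ := ![0, 1, u + (u - β)/(2*(γ-1))]
    let R₂ : Fin 3 → ℝ := ![1, u, u^2/2]
    let R₃ : Fin 3 → ℝ := ![0, 1, u + (u + β)/(2*(γ-1))]
    (ApTV u a γ).mulVec R₁ = ((u - β)/2) • R₁ ∧
    (ApTV u a γ).mulVec R₂ = 0 ∧
    (ApTV u a γ).mulVec R₃ = ((u + β)/2) • R₃ ∧
    ((u - β)/2 ≠ 0 ∧ (u + β)/2 ≠ 0 ∧ (u - β)/2 ≠ (u + β)/2) ∧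
    LinearIndependent ℝ ![R₁, R₂, R₃] := by
  intro β R₁ R₂ R₃
  have hγ1 : γ - 1 ≠ 0 := by linarith
  have hpos : (0:ℝ) < u^2 + 4*a^2 := by positivity
  have hβ2 : β^2 = u^2 + 4*a^2 := Real.sq_sqrt hpos.le
  have hβpos : 0 < β := Real.sqrt_pos.mpr hpos
  have habs : u^2 < β^2 := by nlinarith
  have h1 : u - β < 0 := by nlinarith
  have h2 : 0 < u + β := by nlinarith
  refine ⟨?_, ?_, ?_, ⟨ne_of_lt (by linarith), ne_of_gt (by linarith), by nlinarith⟩, ?_⟩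
  · funext i
    fin_cases i <;>
      simp [ApTV, Matrix.mulVec, dotProduct, R₁, Fin.sum_univ_three] <;>
      field_simp <;> first
        | ring1
        | linear_combination (-1) * hβ2
  · funext i
    fin_cases i <;>
      simp [ApTV, Matrix.mulVec, dotProduct, R₂, Fin.sum_univ_three] <;>
      field_simp <;> ring
  · funext i
    fin_cases i <;>
      simp [ApTV, Matrix.mulVec, dotProduct, R₃, Fin.sum_univ_three] <;>
      field_simp <;> first
        | ring1
        | linear_combination (-1) * hβ2
  · rw [show ![R₁, R₂, R₃] = (!![0, 1, u + (u - β)/(2*(γ-1));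
        1, u, u^2/2; 0, 1, u + (u + β)/(2*(γ-1))] : Matrix (Fin 3) (Fin 3) ℝ) from by
        funext i j; fin_cases i <;> fin_cases j <;> rfl]
    refine Matrix.linearIndependent_rows_iff_isUnit.mpr ?_
    rw [Matrix.isUnit_iff_isUnit_det,
      isUnit_iff_ne_zero, Matrix.det_fin_three]
    intro h
    apply hβpos.ne'
    simp only [Matrix.of_apply, Matrix.cons_val', Matrix.cons_val_zero, Matrix.cons_val_one,
      Matrix.cons_val_two, Matrix.empty_val', Matrix.cons_val_fin_one, Matrix.vecHead,
      Matrix.vecTail, Function.comp_apply, Fin.succ_zero_eq_one, Fin.succ_one_eq_two,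
      Matrix.cons_val_succ] at h
    field_simp at h
    linarith
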